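/- Let σ_χ(u) = F · det(2ω₁) · exp((1/2)uᵗ(η₁ω₁⁻¹)u) · θ[β^χ]((2ω₁)⁻¹u|𝔹) with odd characteristic β^χ = [β₁^χ, β₂^χ], and let β^μ = [β₁^μ, β₂^μ] be an even half-integer characteristic with θ[β^μ](0|𝔹) ≠ 0. Let n₁, n₂ ∈ ℤ^g satisfy (1/2)n₂ = β₁^μ − β₁^χ and (1/2)n₁ = β₂^μ − β₂^χ. Then exp(−uᵗ(η₁n₁ + η₂n₂)) · σ_χ(u + ω₁n₁ + ω₂n₂) / σ_χ(ω₁n₁ + ω₂n₂) = exp((1/2)uᵗ(η₁ω₁⁻¹)u) · θ[β^μ]((2ω₁)⁻¹u|𝔹) / θ[β^μ](0|𝔹). -/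
import Mathlib


open Matrix Complex

/-- Riemann theta function with real characteristics `α`, `β`,
period matrix `B` and argument `z`. -/
noncomputable def theta {g : ℕ} (α β : Fin g → ℝ) (B : Matrix (Fin g) (Fin g) ℂ)
    (z : Fin g → ℂ) : ℂ :=
  ∑' m : Fin g → ℤ,
    Complex.exp (↑Real.pi * I *
        ((fun i => (m i : ℂ) + (α i : ℂ)) ⬝ᵥ (B *ᵥ (fun i => (m i : ℂ) + (α i : ℂ))))
      + 2 * ↑Real.pi * I *
        ((fun i => (m i : ℂ) + (α i : ℂ)) ⬝ᵥ (fun i => z i + (β i : ℂ))))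

/-- The odd sigma function built from the theta function with characteristic. -/
noncomputable def sigma {g : ℕ} (F : ℂ) (ω₁ Λ : Matrix (Fin g) (Fin g) ℂ)
    (β₁ β₂ : Fin g → ℝ) (B : Matrix (Fin g) (Fin g) ℂ) (u : Fin g → ℂ) : ℂ :=
  F * ((2 : ℂ) • ω₁).det
    * Complex.exp ((1 / 2 : ℂ) * (u ⬝ᵥ ((ω₁ᵀ⁻¹ * Λ * ω₁⁻¹) *ᵥ u)))
    * theta β₁ β₂ B (((2 : ℂ) • ω₁)⁻¹ *ᵥ u)

lemma dot_sym {g : ℕ} (B : Matrix (Fin g) (Fin g) ℂ) (hB : Bᵀ = B) (x y : Fin g → ℂ) :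
    x ⬝ᵥ (B *ᵥ y) = y ⬝ᵥ (B *ᵥ x) := by
  rw [dotProduct_mulVec]; nth_rewrite 1 [← hB]; rw [vecMul_transpose, dotProduct_comm]

lemma theta_shift {g : ℕ} (B : Matrix (Fin g) (Fin g) ℂ) (hB : Bᵀ = B)
    (α β a b : Fin g → ℝ) (z : Fin g → ℂ) :
    theta (α + a) (β + b) B z
      = Complex.exp (↑Real.pi * I *
            ((fun i => ((a i : ℝ) : ℂ)) ⬝ᵥ (B *ᵥ (fun i => ((a i : ℝ) : ℂ))))
          + 2 * ↑Real.pi * I *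
            ((fun i => ((a i : ℝ) : ℂ)) ⬝ᵥ (fun i => z i + (β i : ℂ) + (b i : ℂ))))
        * theta α β B (fun i => z i + (B *ᵥ (fun i => ((a i : ℝ) : ℂ))) i + (b i : ℂ)) := by
  unfold theta
  rw [← tsum_mul_left]
  refine tsum_congr fun m => ?_
  rw [← Complex.exp_add]
  congr 1
  set a' : Fin g → ℂ := fun i => ((a i : ℝ) : ℂ) with ha'
  set A : Fin g → ℂ := fun i => (m i : ℂ) + (α i : ℂ) with hA
  set Z : Fin g → ℂ := fun i => z i + (β i : ℂ) + (b i : ℂ) with hZ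
  have h1 : (fun i => (m i : ℂ) + ((α + a) i : ℂ)) = A + a' := by
    funext i; simp only [Pi.add_apply, hA, ha']; push_cast; ring
  have h2 : (fun i => z i + (((β + b) i : ℝ) : ℂ)) = Z := by
    funext i; simp only [Pi.add_apply, hZ]; push_cast; ring
  have h3 : (fun i => (z i + (B *ᵥ a') i + ((b i : ℝ) : ℂ)) + ((β i : ℝ) : ℂ)) = Z + B *ᵥ a' := by
    funext i; simp only [Pi.add_apply, hZ]; ring
  rw [h1, h2]
  show _ = _ + (_ + 2 * ↑Real.pi * I * (A ⬝ᵥ fun i => (z i + (B *ᵥ a') i + ((b i : ℝ) : ℂ)) + ((β i : ℝ) : ℂ)))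
  rw [h3]
  simp only [mulVec_add, dotProduct_add, add_dotProduct]
  rw [dot_sym B hB a' A]
  ring

lemma cancel_aux {T₁ T₀ F D e₁ e₂ e₃ e₄ e₅ e₆ : ℂ} (hF : F ≠ 0) (hD : D ≠ 0) (hT₀ : T₀ ≠ 0)
    (hE : e₁ + e₂ + e₆ = e₃ + e₄ + e₅) :
    Complex.exp e₁ * (F * D * Complex.exp e₂ * T₁) / (F * D * Complex.exp e₅ * T₀)
      = Complex.exp e₃ * (Complex.exp e₄ * T₁) / (Complex.exp e₆ * T₀) := by
  have h1 : F * D * Complex.exp e₅ * T₀ ≠ 0 :=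
    mul_ne_zero (mul_ne_zero (mul_ne_zero hF hD) (Complex.exp_ne_zero _)) hT₀
  have h2 : Complex.exp e₆ * T₀ ≠ 0 := mul_ne_zero (Complex.exp_ne_zero _) hT₀
  rw [div_eq_div_iff h1 h2]
  have key : Complex.exp e₁ * Complex.exp e₂ * Complex.exp e₆
      = Complex.exp e₃ * Complex.exp e₄ * Complex.exp e₅ := by
    rw [← Complex.exp_add, ← Complex.exp_add, ← Complex.exp_add, ← Complex.exp_add, hE]
  linear_combination (F * D * T₁ * T₀) * key

theorem statement18 {g : ℕ} (F : ℂ) (hF : F ≠ 0)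
    (ω₁ B Λ : Matrix (Fin g) (Fin g) ℂ)
    (hω₁ : IsUnit ω₁) (hB : Bᵀ = B) (hIm : (B.map Complex.im).PosDef)
    (hΛ : Λᵀ = Λ)
    (βχ₁ βχ₂ βμ₁ βμ₂ : Fin g → ℝ)
    (hβχ₁ : ∀ i, ∃ n : ℤ, βχ₁ i = n / 2) (hβχ₂ : ∀ i, ∃ n : ℤ, βχ₂ i = n / 2)
    (hβμ₁ : ∀ i, ∃ n : ℤ, βμ₁ i = n / 2) (hβμ₂ : ∀ i, ∃ n : ℤ, βμ₂ i = n / 2)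
    (hodd : ∃ n : ℤ, Odd n ∧ (4 * (βχ₁ ⬝ᵥ βχ₂) : ℝ) = n)
    (heven : ∃ n : ℤ, Even n ∧ (4 * (βμ₁ ⬝ᵥ βμ₂) : ℝ) = n)
    (hμne : theta βμ₁ βμ₂ B 0 ≠ 0)
    (n₁ n₂ : Fin g → ℤ)
    (hn₂ : (fun i => ((n₂ i : ℝ) / 2)) = βμ₁ - βχ₁)
    (hn₁ : (fun i => ((n₁ i : ℝ) / 2)) = βμ₂ - βχ₂)
    (hχne : sigma F ω₁ Λ βχ₁ βχ₂ B
        (ω₁ *ᵥ (fun i => (n₁ i : ℂ)) + (ω₁ * B) *ᵥ (fun i => (n₂ i : ℂ))) ≠ 0)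
    (u : Fin g → ℂ) :
    Complex.exp (-(u ⬝ᵥ ((ω₁ᵀ⁻¹ * Λ) *ᵥ (fun i => (n₁ i : ℂ))
          + (ω₁ᵀ⁻¹ * (Λ * B - ((↑Real.pi * I / 2 : ℂ)) • (1 : Matrix (Fin g) (Fin g) ℂ)))
              *ᵥ (fun i => (n₂ i : ℂ)))))
      * sigma F ω₁ Λ βχ₁ βχ₂ B
          (u + (ω₁ *ᵥ (fun i => (n₁ i : ℂ)) + (ω₁ * B) *ᵥ (fun i => (n₂ i : ℂ))))
      / sigma F ω₁ Λ βχ₁ βχ₂ B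
          (ω₁ *ᵥ (fun i => (n₁ i : ℂ)) + (ω₁ * B) *ᵥ (fun i => (n₂ i : ℂ)))
      = Complex.exp ((1 / 2 : ℂ) * (u ⬝ᵥ ((ω₁ᵀ⁻¹ * Λ * ω₁⁻¹) *ᵥ u)))
          * theta βμ₁ βμ₂ B (((2 : ℂ) • ω₁)⁻¹ *ᵥ u) / theta βμ₁ βμ₂ B 0 := by
  have hd : IsUnit ω₁.det := (Matrix.isUnit_iff_isUnit_det _).mp hω₁
  haveI : Invertible (2:ℂ) := invertibleOfNonzero two_ne_zero
  set n₁c : Fin g → ℂ := fun i => (n₁ i : ℂ) with hn₁c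
  set n₂c : Fin g → ℂ := fun i => (n₂ i : ℂ) with hn₂c
  set W : Fin g → ℂ := ω₁ *ᵥ n₁c + (ω₁ * B) *ᵥ n₂c with hWdef
  set M : Matrix (Fin g) (Fin g) ℂ := ω₁ᵀ⁻¹ * Λ * ω₁⁻¹ with hMdef
  set v : Fin g → ℂ := ((2:ℂ) • ω₁)⁻¹ *ᵥ u with hvdef
  set ar : Fin g → ℝ := fun i => (n₂ i : ℝ)/2 with har
  set br : Fin g → ℝ := fun i => (n₁ i : ℝ)/2 with hbr
  have hμ1 : βμ₁ = βχ₁ + ar := by rw [hn₂]; funext i; simp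
  have hμ2 : βμ₂ = βχ₂ + br := by rw [hn₁]; funext i; simp
  have h2inv : ((2:ℂ) • ω₁)⁻¹ = (2:ℂ)⁻¹ • ω₁⁻¹ := by
    rw [Matrix.inv_smul (A := ω₁) (2:ℂ) hd, invOf_eq_inv (2:ℂ)]
  have hars : (fun i => ((ar i : ℝ) : ℂ)) = (2:ℂ)⁻¹ • n₂c := by
    funext i; simp [har, hn₂c]; push_cast; ring
  have hbrs : (fun i => ((br i : ℝ) : ℂ)) = (2:ℂ)⁻¹ • n₁c := by
    funext i; simp [hbr, hn₁c]; push_cast; ring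
  have hWinv : ω₁⁻¹ *ᵥ W = n₁c + B *ᵥ n₂c := by
    rw [hWdef, mulVec_add, mulVec_mulVec, mulVec_mulVec, Matrix.nonsing_inv_mul _ hd,
      ← Matrix.mul_assoc, Matrix.nonsing_inv_mul _ hd, Matrix.one_mul, Matrix.one_mulVec]
  have hZ0f : ((2:ℂ) • ω₁)⁻¹ *ᵥ W = (2:ℂ)⁻¹ • n₁c + B *ᵥ ((2:ℂ)⁻¹ • n₂c) := by
    rw [h2inv, smul_mulVec, hWinv, mulVec_smul, smul_add]
  have hZ0 : ((2:ℂ) • ω₁)⁻¹ *ᵥ W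
      = (fun i => (0 : Fin g → ℂ) i + (B *ᵥ (fun i => ((ar i : ℝ) : ℂ))) i + ((br i : ℝ) : ℂ)) := by
    rw [hZ0f]; funext i; rw [hars, congrFun hbrs i]
    simp [Pi.add_apply, Pi.smul_apply, smul_eq_mul]; ring
  have hZv : ((2:ℂ) • ω₁)⁻¹ *ᵥ (u + W)
      = (fun i => v i + (B *ᵥ (fun i => ((ar i : ℝ) : ℂ))) i + ((br i : ℝ) : ℂ)) := by
    rw [mulVec_add, hZ0f, ← hvdef]; funext i; rw [hars, congrFun hbrs i]
    simp [Pi.add_apply, Pi.smul_apply, smul_eq_mul]; ring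
  have Hv := theta_shift B hB βχ₁ βχ₂ ar br v
  rw [← hμ1, ← hμ2] at Hv
  have H0 := theta_shift B hB βχ₁ βχ₂ ar br 0
  rw [← hμ1, ← hμ2] at H0
  -- nonzeroness of the denominator theta
  unfold sigma at hχne
  rw [hZ0] at hχne
  have hT₀ : theta βχ₁ βχ₂ B
      (fun i => (0 : Fin g → ℂ) i + (B *ᵥ (fun i => ((ar i : ℝ) : ℂ))) i + ((br i : ℝ) : ℂ)) ≠ 0 :=
    fun h => hχne (by rw [h, mul_zero])
  have hDd : ((2:ℂ) • ω₁).det ≠ 0 := by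
    rw [Matrix.det_smul]; exact mul_ne_zero (pow_ne_zero _ two_ne_zero) hd.ne_zero
  unfold sigma
  rw [hZv, hZ0, Hv, H0]
  refine cancel_aux hF hDd hT₀ ?_
  rw [← hMdef]
  have hMsym : Mᵀ = M := by
    rw [hMdef]
    simp [Matrix.transpose_mul, Matrix.transpose_nonsing_inv, hΛ, Matrix.mul_assoc]
  have hMω : M * ω₁ = ω₁ᵀ⁻¹ * Λ := by
    rw [hMdef, Matrix.mul_assoc, Matrix.nonsing_inv_mul _ hd, Matrix.mul_one]
  have hMW : M *ᵥ W = (ω₁ᵀ⁻¹ * Λ) *ᵥ n₁c + (ω₁ᵀ⁻¹ * (Λ * B)) *ᵥ n₂c := by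
    rw [hWdef, mulVec_add, mulVec_mulVec, mulVec_mulVec, ← Matrix.mul_assoc, hMω,
      Matrix.mul_assoc]
  have hP₂ : (ω₁ᵀ⁻¹ * (Λ * B - ((↑Real.pi * I / 2 : ℂ)) • 1)) *ᵥ n₂c
      = (ω₁ᵀ⁻¹ * (Λ * B)) *ᵥ n₂c - (↑Real.pi * I / 2 : ℂ) • (ω₁ᵀ⁻¹ *ᵥ n₂c) := by
    rw [Matrix.mul_sub, sub_mulVec, Matrix.mul_smul, Matrix.mul_one, smul_mulVec]
  have hWMu : W ⬝ᵥ M *ᵥ u = u ⬝ᵥ M *ᵥ W := dot_sym M hMsym W u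
  have hvec : n₂c ⬝ᵥ (ω₁⁻¹ *ᵥ u) = u ⬝ᵥ (ω₁ᵀ⁻¹ *ᵥ n₂c) := by
    rw [dotProduct_mulVec, dotProduct_comm]
    congr 1
    rw [← Matrix.transpose_nonsing_inv, mulVec_transpose]
  have hdav : ((fun i => ((ar i : ℝ) : ℂ)) ⬝ᵥ (fun i => v i + ((βχ₂ i : ℝ) : ℂ) + ((br i : ℝ) : ℂ)))
      = ((fun i => ((ar i : ℝ) : ℂ)) ⬝ᵥ (fun i => (0 : Fin g → ℂ) i + ((βχ₂ i : ℝ) : ℂ) + ((br i : ℝ) : ℂ)))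
        + (4 : ℂ)⁻¹ * (u ⬝ᵥ (ω₁ᵀ⁻¹ *ᵥ n₂c)) := by
    have h4 : (fun i => v i + ((βχ₂ i : ℝ) : ℂ) + ((br i : ℝ) : ℂ))
        = (fun i => (0 : Fin g → ℂ) i + ((βχ₂ i : ℝ) : ℂ) + ((br i : ℝ) : ℂ)) + v := by
      funext i; simp [Pi.add_apply]; ring
    rw [h4, dotProduct_add, hars, hvdef, h2inv, smul_mulVec]
    simp only [smul_dotProduct, dotProduct_smul, smul_eq_mul]
    rw [hvec]
    ring
  simp only [mulVec_add, dotProduct_add, add_dotProduct, hMW, hP₂, dotProduct_sub,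
    dotProduct_smul, smul_eq_mul, hWMu, hdav]
  ring
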